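/- arXiv:1602.00996 — 4 statements merged into one kernel-verified Lean document; each statement's English description precedes it below -/
import Mathlib

section
/- Let μ ∈ ℂ and let (φ₋₁, φ₁) be a Casimir representation of semi-level μ on a torsion-free ℂ[z]-module V (for instance V = ℂ[z]^n). If a ℂ[z]-linear endomorphism φ of V commutes with φ₁, then φ also commutes with φ₋₁. Hence the algebra of sl(2)-endomorphisms of V (ℂ-linear maps commuting with multiplication by z, φ₋₁ and φ₁) equals {φ ∈ End_{ℂ[z]}(V) : φ∘φ₁ = φ₁∘φ}. -/
/-!
Since `φ₋₁ ∘ φ₁` is multiplication by the nonzero polynomial `π_μ` and `M` is torsion-free,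
`φ₁` is injective. If `φ` is `ℂ[z]`-linear and commutes with `φ₁`, then
`φ₁ (φ (φ₋₁ v)) = φ (π_μ(z+1) • v) = π_μ(z+1) • φ v = φ₁ (φ₋₁ (φ v))`,
and cancelling `φ₁` shows that `φ` commutes with `φ₋₁`.
-/

open Polynomial

/-- The shift automorphism `∇ : ℂ[z] → ℂ[z]`, `p(z) ↦ p(z+1)`. -/
noncomputable def nabla : Polynomial ℂ ≃ₐ[ℂ] Polynomial ℂ := algEquivAevalXAddC 1

/-- `End_k(V)`: additive endomorphisms with `φ(p • v) = (∇^k p) • φ(v)`. -/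
def IsSemilinearEnd {M : Type*} [AddCommMonoid M] [Module (Polynomial ℂ) M]
    (k : ℤ) (φ : M → M) : Prop :=
  (∀ v w : M, φ (v + w) = φ v + φ w) ∧
  ∀ (p : Polynomial ℂ) (v : M), φ (p • v) = ((nabla ^ k) p) • φ v

/-- `π_μ(z) = (z+μ)(z-μ-1)`. -/
noncomputable def piMu (μ : ℂ) : Polynomial ℂ := (X + C μ) * (X - C μ - 1)

/-- A Casimir representation of semi-level `μ` on a `ℂ[z]`-module `M`:
a pair `(φ₋₁, φ₁)` of semilinear endomorphisms of degrees `-1` and `1` with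
`φ₋₁ ∘ φ₁ = π_μ(z)·` and `φ₁ ∘ φ₋₁ = π_μ(z+1)·`. -/
def IsCasimirRep {M : Type*} [AddCommMonoid M] [Module (Polynomial ℂ) M]
    (μ : ℂ) (φm φp : M → M) : Prop :=
  IsSemilinearEnd (-1) φm ∧ IsSemilinearEnd 1 φp ∧
  (∀ v, φm (φp v) = piMu μ • v) ∧
  (∀ v, φp (φm v) = (nabla (piMu μ)) • v)

theorem piMu_ne_zero (μ : ℂ) : piMu μ ≠ 0 := by
  have h : piMu μ = (X + C μ) * (X - C (μ + 1)) := by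
    simp only [piMu, map_add, map_one]
    ring
  rw [h]
  exact ((monic_X_add_C μ).mul (monic_X_sub_C (μ + 1))).ne_zero

section

variable {R M : Type*} [Semiring R] [AddCommGroup M] [Module R M]

theorem injective_of_comp_eq_smul
    (htf : ∀ (p : R) (v : M), p • v = 0 → p = 0 ∨ v = 0)
    {p : R} (hp : p ≠ 0) {f g : M → M} (hgf : ∀ v, g (f v) = p • v) :
    Function.Injective f := by
  intro a b hab
  have hsmul : p • (a - b) = 0 := by
    rw [smul_sub, ← hgf a, ← hgf b, hab, sub_self]
  exact sub_eq_zero.mp ((htf p _ hsmul).resolve_left hp)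

theorem LinearMap.commute_of_comp_eq_smul_of_injective
    (φ : M →ₗ[R] M) {q : R} {f g : M → M} (hf : Function.Injective f)
    (hfg : ∀ v, f (g v) = q • v) (hφ : ∀ v, φ (f v) = f (φ v)) (v : M) :
    φ (g v) = g (φ v) :=
  hf <| by rw [← hφ, hfg, hfg, φ.map_smul]

end

theorem IsCasimirRep.injective_right {M : Type*} [AddCommGroup M] [Module (Polynomial ℂ) M]
    (htf : ∀ (p : Polynomial ℂ) (v : M), p • v = 0 → p = 0 ∨ v = 0)
    {μ : ℂ} {φm φp : M → M} (h : IsCasimirRep μ φm φp) : Function.Injective φp :=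
  injective_of_comp_eq_smul htf (piMu_ne_zero μ) h.2.2.1

/-- for a Casimir representation `(φ₋₁, φ₁)` of semi-level `μ` on a torsion-free
`ℂ[z]`-module `M`, any `ℂ[z]`-linear endomorphism commuting with `φ₁` also commutes with
`φ₋₁`; hence the `sl(2)`-endomorphism algebra equals
`{φ ∈ End_{ℂ[z]}(M) : φ∘φ₁ = φ₁∘φ}`. -/
theorem stmt_5 {M : Type*} [AddCommGroup M] [Module (Polynomial ℂ) M]
    (htf : ∀ (p : Polynomial ℂ) (v : M), p • v = 0 → p = 0 ∨ v = 0)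
    (μ : ℂ) (φm φp : M → M) (h : IsCasimirRep μ φm φp) :
    (∀ φ : M →ₗ[Polynomial ℂ] M, (∀ v, φ (φp v) = φp (φ v)) →
      ∀ v, φ (φm v) = φm (φ v)) ∧
    {φ : M →ₗ[Polynomial ℂ] M |
        (∀ v, φ (φm v) = φm (φ v)) ∧ (∀ v, φ (φp v) = φp (φ v))} =
      {φ : M →ₗ[Polynomial ℂ] M | ∀ v, φ (φp v) = φp (φ v)} := by
  have commute_left : ∀ φ : M →ₗ[Polynomial ℂ] M, (∀ v, φ (φp v) = φp (φ v)) →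
      ∀ v, φ (φm v) = φm (φ v) := fun φ =>
    φ.commute_of_comp_eq_smul_of_injective (h.injective_right htf) h.2.2.2
  refine ⟨commute_left, Set.ext fun φ => ⟨And.right, fun hφ => ⟨commute_left φ hφ, hφ⟩⟩⟩
end

section
/- Let μ ∈ ℂ and γ ∈ ℂ∖{0}. The rank-one Casimir representations of semi-level μ of type I, given by (φ₋₁, φ₁) = (γ⁻¹·∇⁻¹, γ·(z+μ+1)(z−μ)·∇) on ℂ[z], and of type IV, given by (φ₋₁, φ₁) = (γ⁻¹·(z+μ)(z−μ−1)·∇⁻¹, γ·∇) on ℂ[z], are irreducible: their only sl(2)-submodules are 0 and ℂ[z]. -/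
/-!
Both representations contain a shift operator up to a nonzero scalar: `φ₋₁` of type I is
`γ⁻¹ ∇⁻¹`, and `φ₁` of type IV is `γ ∇`. So an `sl(2)`-submodule is an ideal of `ℂ[z]` stable
under `p(z) ↦ p(z + a)` for some `a ≠ 0`. The finite difference `p(z + a) - p(z)` of a nonzero
element of such an ideal lies in the ideal and has smaller degree, so descending on the degree we
reach a nonzero element with period `a`. In characteristic zero it is constant, since it takes the
value `p(0)` at every `n a`; hence the ideal contains a unit.
-/

open Polynomial

/-- An `sl(2)`-representation `(φ₋₁, φ₁)` on a `ℂ[z]`-module is irreducible if its only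
invariant `ℂ[z]`-submodules are `0` and the whole module. -/
def IsIrreducibleRep {M : Type*} [AddCommGroup M] [Module (Polynomial ℂ) M]
    (φm φp : M → M) : Prop :=
  ∀ W : Submodule (Polynomial ℂ) M,
    (∀ w ∈ W, φm w ∈ W) → (∀ w ∈ W, φp w ∈ W) → W = ⊥ ∨ W = ⊤

namespace Polynomial

theorem eq_C_of_taylor_eq_self {R : Type*} [CommRing R] [IsDomain R] [CharZero R] {a : R}
    (ha : a ≠ 0) {p : R[X]} (h : taylor a p = p) : p = C (p.eval 0) := by
  have periodic : ∀ n : ℕ, p.eval (n * a) = p.eval 0 := by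
    intro n
    induction n with
    | zero => simp
    | succ n ih => rw [Nat.cast_succ, add_one_mul, ← taylor_eval, h, ih]
  refine eq_of_infinite_eval_eq _ _ (Set.infinite_of_injective_forall_mem
    (f := fun n : ℕ => (n : R) * a) (fun m n hmn => ?_) (fun n => ?_))
  · exact Nat.cast_injective (mul_right_cancel₀ ha hmn)
  · simp [periodic n]

theorem degree_taylor_sub_lt {R : Type*} [CommRing R] (r : R) {p : R[X]} (hp : p ≠ 0) :
    (taylor r p - p).degree < p.degree :=
  degree_sub_lt_right (degree_taylor p r) hp (leadingCoeff_taylor r p)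

end Polynomial

theorem Ideal.eq_bot_or_top_of_taylor_mem {K : Type*} [Field K] [CharZero K] {a : K}
    (ha : a ≠ 0) (I : Ideal K[X]) (hI : ∀ p ∈ I, taylor a p ∈ I) : I = ⊥ ∨ I = ⊤ := by
  refine or_iff_not_imp_left.2 fun hbot => ?_
  obtain ⟨p, hpI, hp⟩ := Submodule.exists_mem_ne_zero_of_ne_bot hbot
  induction hn : p.natDegree using Nat.strong_induction_on generalizing p with
  | _ n ih =>
    have hdiff : taylor a p - p ∈ I := I.sub_mem (hI p hpI) hpI
    by_cases hfix : taylor a p - p = 0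
    · have hconst := eq_C_of_taylor_eq_self ha (sub_eq_zero.1 hfix)
      have hunit : IsUnit p := by
        rw [hconst, isUnit_C]
        exact Ne.isUnit fun h0 => hp (by rw [hconst, h0, C_0])
      exact I.eq_top_of_isUnit_mem hpI hunit
    · exact ih _ (hn ▸ natDegree_lt_natDegree hfix (degree_taylor_sub_lt a hp)) _ hdiff hfix rfl

theorem nabla_apply (p : ℂ[X]) : nabla p = taylor 1 p := rfl

theorem nabla_symm_apply (p : ℂ[X]) : nabla.symm p = taylor (-1) p := by
  rw [nabla, algEquivAevalXAddC_symm]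
  rfl

/-- the rank-one Casimir representations of semi-level `μ` of type I,
`(γ⁻¹·∇⁻¹, γ(z+μ+1)(z−μ)·∇)`, and of type IV, `(γ⁻¹(z+μ)(z−μ−1)·∇⁻¹, γ·∇)`, on `ℂ[z]`
are irreducible. -/
theorem stmt_11 (μ : ℂ) (γ : ℂ) (hγ : γ ≠ 0) :
    IsIrreducibleRep (fun p : Polynomial ℂ => C γ⁻¹ * nabla.symm p)
      (fun p : Polynomial ℂ => C γ * ((X + C μ + 1) * (X - C μ)) * nabla p) ∧
    IsIrreducibleRep (fun p : Polynomial ℂ => C γ⁻¹ * ((X + C μ) * (X - C μ - 1)) * nabla.symm p)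
      (fun p : Polynomial ℂ => C γ * nabla p) := by
  refine ⟨fun W hm _ => ?_, fun W _ hp => ?_⟩
  · refine Ideal.eq_bot_or_top_of_taylor_mem (neg_ne_zero.2 one_ne_zero) W fun w hw => ?_
    have : C γ⁻¹ * nabla.symm w ∈ W := hm w hw
    rwa [C_mul', Submodule.smul_mem_iff _ (inv_ne_zero hγ), nabla_symm_apply] at this
  · refine Ideal.eq_bot_or_top_of_taylor_mem one_ne_zero W fun w hw => ?_
    have : C γ * nabla w ∈ W := hp w hw
    rwa [C_mul', Submodule.smul_mem_iff _ hγ, nabla_apply] at this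
end

section
/- Let μ ∈ ℂ, let (φ₋₁, φ₁) be a Casimir representation of semi-level μ on V = ℂ[z]^n, and let V' = ℂ[z]^k carry an sl(2)-module structure given by φ'₋₁ ∈ End₋₁(V'), φ'₁ ∈ End₁(V') with φ'₋₁∘φ'₁ − φ'₁∘φ'₋₁ = multiplication by −2z. Let ψ : V' → V be an injective ℂ[z]-linear map with ψ∘φ'₁ = φ₁∘ψ and ψ∘φ'₋₁ = φ₋₁∘ψ (an injective morphism of sl(2)-modules). If φ'₁ is bijective (i.e. V' has Smith type S₀(k,0) = (1,…,1)), then the quotient V/ψ(V') is a torsion-free ℂ[z]-module. -/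
open Polynomial

/-!
If `X - a` kills a nonzero class `[w]` of `Q = V / ψ(V')`, write `(X - a) • w = ψ v`. Since `φ₁`
shifts scalars by `∇`, applying it gives `(X - (a - 1)) • φ₁ w = ψ (φ'₁ v)`, and because `ψ` is
injective and `φ'₁` bijective, `[φ₁ w]` is again nonzero. So the set of `a` for which `Q` has
`(X - a)`-torsion is stable under `a ↦ a - 1`. It is also finite, being contained in the roots of a
nonzero annihilator of the torsion of the finitely generated module `Q`, hence empty. Since
every nonzero polynomial over `ℂ` is a product of linear factors, `Q` is torsion-free.
-/

theorem Set.eq_empty_of_finite_of_forall_sub_one_mem {R : Type*} [AddCommGroupWithOne R]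
    [CharZero R] {S : Set R} (hS : S.Finite) (h : ∀ a ∈ S, a - 1 ∈ S) : S = ∅ := by
  refine Set.eq_empty_iff_forall_notMem.mpr fun a ha => Set.not_infinite.mpr hS ?_
  have hmem : ∀ m : ℕ, a - m ∈ S := by
    intro m
    induction m with
    | zero => simpa using ha
    | succ m ih => rw [Nat.cast_succ, ← sub_sub]; exact h _ ih
  exact Set.infinite_of_injective_forall_mem (sub_right_injective.comp Nat.cast_injective) hmem

section Shift

variable {R M M' : Type*} [CommRing R] [AddCommGroup M] [Module R M] [AddCommGroup M']
  [Module R M'] {σ : R →+* R}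

theorem torsionBy_quotient_range_ne_bot_map (ψ : M' →ₗ[R] M) (hψ : Function.Injective ψ)
    (f : M →ₛₗ[σ] M) (f' : M' →ₛₗ[σ] M') (hf' : Function.Bijective f')
    (hcomm : ∀ v, ψ (f' v) = f (ψ v)) {r : R} (hr : IsSMulRegular M r)
    (h : Submodule.torsionBy R (M ⧸ LinearMap.range ψ) r ≠ ⊥) :
    Submodule.torsionBy R (M ⧸ LinearMap.range ψ) (σ r) ≠ ⊥ := by
  obtain ⟨x, hx, hx0⟩ := (Submodule.ne_bot_iff _).mp h
  obtain ⟨w, rfl⟩ := Submodule.Quotient.mk_surjective _ x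
  rw [Submodule.mem_torsionBy_iff, ← Submodule.Quotient.mk_smul,
    Submodule.Quotient.mk_eq_zero] at hx
  obtain ⟨v, hv⟩ := hx
  refine (Submodule.ne_bot_iff _).mpr ⟨Submodule.Quotient.mk (f w), ?_, ?_⟩
  · rw [Submodule.mem_torsionBy_iff, ← Submodule.Quotient.mk_smul, Submodule.Quotient.mk_eq_zero,
      ← f.map_smulₛₗ, ← hv, ← hcomm]
    exact LinearMap.mem_range_self ψ _
  · rw [Ne, Submodule.Quotient.mk_eq_zero] at hx0 ⊢
    rintro ⟨u', hu'⟩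
    obtain ⟨u, rfl⟩ := hf'.2 u'
    have hvu : v = r • u := hf'.1 <| hψ <| by
      rw [hcomm, hv, f.map_smulₛₗ, f'.map_smulₛₗ, map_smul, hu']
    exact hx0 ⟨u, hr (show r • ψ u = r • w by rw [← hv, hvu, map_smul])⟩

end Shift

namespace Polynomial

variable {K M : Type*} [Field K] [AddCommGroup M] [Module K[X] M]

theorem smul_eq_C_eval_smul_of_X_sub_C_smul_eq_zero {a : K} {x : M} (hx : (X - C a) • x = 0)
    (p : K[X]) : p • x = C (p.eval a) • x := by
  obtain ⟨q, hq⟩ := X_sub_C_dvd_sub_C_eval (p := p) (a := a)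
  rw [← sub_eq_zero, ← sub_smul, hq, mul_comm, mul_smul, hx, smul_zero]

theorem isRoot_of_smul_eq_zero_of_X_sub_C_smul_eq_zero {a : K} {x : M} (hx0 : x ≠ 0)
    (hx : (X - C a) • x = 0) {p : K[X]} (hpx : p • x = 0) : p.IsRoot a := by
  by_contra hpa
  have hunit : IsUnit (C (p.eval a)) := isUnit_C.mpr (isUnit_iff_ne_zero.mpr hpa)
  exact hx0 <| hunit.smul_eq_zero.mp <| by
    rw [← smul_eq_C_eval_smul_of_X_sub_C_smul_eq_zero hx, hpx]

theorem finite_setOf_torsionBy_X_sub_C_ne_bot [Module.Finite K[X] M] :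
    {a : K | Submodule.torsionBy K[X] M (X - C a) ≠ ⊥}.Finite := by
  obtain ⟨d, hd, hd0⟩ := Submodule.annihilator_top_inter_nonZeroDivisors
    (Submodule.torsion_isTorsion (R := K[X]) (M := M))
  refine (finite_setOfPred_isRoot (nonZeroDivisors.ne_zero hd0)).subset fun a ha => ?_
  obtain ⟨x, hx, hx0⟩ := (Submodule.ne_bot_iff _).mp ha
  rw [Submodule.mem_torsionBy_iff] at hx
  have hxT : x ∈ Submodule.torsion K[X] M :=
    ⟨⟨_, mem_nonZeroDivisors_of_ne_zero (X_sub_C_ne_zero a)⟩, hx⟩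
  have hdx : d • x = 0 := congrArg Subtype.val
    (Submodule.mem_annihilator.mp hd ⟨x, hxT⟩ Submodule.mem_top)
  exact isRoot_of_smul_eq_zero_of_X_sub_C_smul_eq_zero hx0 hx hdx

theorem prod_X_sub_C_smul_eq_zero_iff (h : ∀ a : K, Submodule.torsionBy K[X] M (X - C a) = ⊥)
    (s : Multiset K) {x : M} : (s.map (X - C ·)).prod • x = 0 ↔ x = 0 := by
  induction s using Multiset.induction_on with
  | empty => simp
  | cons a s ih =>
    rw [Multiset.map_cons, Multiset.prod_cons, mul_smul, ← Submodule.mem_torsionBy_iff, h a,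
      Submodule.mem_bot, ih]

theorem isTorsionFree_of_forall_torsionBy_X_sub_C_eq_bot [IsAlgClosed K]
    (h : ∀ a : K, Submodule.torsionBy K[X] M (X - C a) = ⊥) : Module.IsTorsionFree K[X] M where
  isSMulRegular p hp x y hxy := by
    have hp0 : p ≠ 0 := hp.ne_zero
    have hunit : IsUnit (C p.leadingCoeff) := isUnit_C.mpr (leadingCoeff_ne_zero.mpr hp0).isUnit
    rw [← sub_eq_zero, ← prod_X_sub_C_smul_eq_zero_iff h p.roots, ← hunit.smul_eq_zero, smul_smul,
      C_leadingCoeff_mul_prod_multiset_X_sub_C IsAlgClosed.card_roots_eq_natDegree, smul_sub]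
    exact sub_eq_zero.mpr hxy

end Polynomial

def IsSemilinearEnd.toSemilinearMap {M : Type*} [AddCommMonoid M] [Module ℂ[X] M] {k : ℤ}
    {φ : M → M} (hφ : IsSemilinearEnd k φ) :
    M →ₛₗ[((nabla ^ k : ℂ[X] ≃ₐ[ℂ] ℂ[X]) : ℂ[X] →+* ℂ[X])] M where
  toFun := φ
  map_add' := hφ.1
  map_smul' := hφ.2

lemma nabla_X_sub_C (a : ℂ) : nabla (X - C a) = X - C (a - 1) := by
  simp only [nabla, algEquivAevalXAddC, algEquivOfCompEqX_apply, aeval_X, aeval_C,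
    algebraMap_eq, map_sub, map_one]
  ring

theorem stmt_17_general (μ : ℂ) (n k : ℕ)
    (φm φp : (Fin n → Polynomial ℂ) → (Fin n → Polynomial ℂ))
    (h : IsCasimirRep μ φm φp)
    (φp' : (Fin k → Polynomial ℂ) → (Fin k → Polynomial ℂ))
    (hp' : IsSemilinearEnd 1 φp')
    (ψ : (Fin k → Polynomial ℂ) →ₗ[Polynomial ℂ] (Fin n → Polynomial ℂ))
    (hinj : Function.Injective ψ)
    (hintp : ∀ v, ψ (φp' v) = φp (ψ v))
    (hbij : Function.Bijective φp') :
    ∀ (q : Polynomial ℂ) (x : (Fin n → Polynomial ℂ) ⧸ LinearMap.range ψ),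
      q • x = 0 → q = 0 ∨ x = 0 := by
  have hshift (a : ℂ)
      (ha : Submodule.torsionBy ℂ[X] ((Fin n → ℂ[X]) ⧸ LinearMap.range ψ) (X - C a) ≠ ⊥) :
      Submodule.torsionBy ℂ[X] ((Fin n → ℂ[X]) ⧸ LinearMap.range ψ) (X - C (a - 1)) ≠ ⊥ := by
    simpa [nabla_X_sub_C] using torsionBy_quotient_range_ne_bot_map ψ hinj
      h.2.1.toSemilinearMap hp'.toSemilinearMap hbij hintp
      (IsSMulRegular.of_ne_zero (X_sub_C_ne_zero a)) ha
  have hempty := Set.eq_empty_of_finite_of_forall_sub_one_mem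
    finite_setOf_torsionBy_X_sub_C_ne_bot hshift
  have := isTorsionFree_of_forall_torsionBy_X_sub_C_eq_bot fun a => by
    simpa using Set.eq_empty_iff_forall_notMem.mp hempty a
  exact fun q x hqx => smul_eq_zero.mp hqx

/-- let `(φ₋₁, φ₁)` be a Casimir representation of semi-level `μ` on
`V = ℂ[z]^n`, let `V' = ℂ[z]^k` carry an `sl(2)`-module structure `(φ'₋₁, φ'₁)` and let
`ψ : V' → V` be an injective morphism of `sl(2)`-modules. If `φ'₁` is bijective (Smith type
`S₀(k,0)`), then `V/ψ(V')` is a torsion-free `ℂ[z]`-module. -/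
theorem stmt_17 (μ : ℂ) (n k : ℕ)
    (φm φp : (Fin n → Polynomial ℂ) → (Fin n → Polynomial ℂ))
    (h : IsCasimirRep μ φm φp)
    (φm' φp' : (Fin k → Polynomial ℂ) → (Fin k → Polynomial ℂ))
    (hm' : IsSemilinearEnd (-1) φm') (hp' : IsSemilinearEnd 1 φp')
    (hcomm' : ∀ v : Fin k → Polynomial ℂ,
      φm' (φp' v) - φp' (φm' v) = ((-2 : Polynomial ℂ) * X) • v)
    (ψ : (Fin k → Polynomial ℂ) →ₗ[Polynomial ℂ] (Fin n → Polynomial ℂ))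
    (hinj : Function.Injective ψ)
    (hintp : ∀ v, ψ (φp' v) = φp (ψ v))
    (hintm : ∀ v, ψ (φm' v) = φm (ψ v))
    (hbij : Function.Bijective φp') :
    ∀ (q : Polynomial ℂ) (x : (Fin n → Polynomial ℂ) ⧸ LinearMap.range ψ),
      q • x = 0 → q = 0 ∨ x = 0 :=
  stmt_17_general μ n k φm φp h φp' hp' ψ hinj hintp hbij
end

section
/- Let μ ∈ ℂ and let A₋₁, A₁ ∈ M_n(ℂ[z]) satisfy A₋₁(z)·A₁(z−1) = π_μ(z)·I_n and A₁(z)·A₋₁(z+1) = π_μ(z+1)·I_n, so that (φ₋₁, φ₁) := (A₋₁∘∇⁻¹, A₁∘∇) is a Casimir representation of semi-level μ on ℂ[z]^n. Then, with respect to the dual basis, the dual representation on Hom_{ℂ[z]}(ℂ[z]^n, ℂ[z]) ≅ ℂ[z]^n (given by φ₁^∨(ω) = ∇∘ω∘φ₋₁) satisfies φ₁^∨ = A₋₁(z+1)ᵗ∘∇. Moreover, if A₁(z) = U(z)·diag(s₁,…,s_n)·V(z) with U, V ∈ GL_n(ℂ[z]), each s_i monic and s_i dividing s_{i+1}, then there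 exist U', V' ∈ GL_n(ℂ[z]) such that A₋₁(z+1)ᵗ = U'(z)·diag(π_μ(z+1)/s_n(z), …, π_μ(z+1)/s₁(z))·V'(z), where each π_μ(z+1)/s_i(z) lies in ℂ[z] since s_i divides π_μ(z+1). In particular, if the representation has Smith type S₊(i,j,k), S₀(l,m) or S₋(i,j,k), then the dual representation has Smith type S₋(k,j,i), S₀(m,l) or S₊(k,j,i) respectively. -/
open Polynomial

/-- Block description of a diagonal Smith form: `a` ones, then the linear factor `d` up to
position `b`, then `π_μ(z+1)`'s. (`a = b` gives the types `S₀(l,m)`; `d = z+μ+1` gives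
`S₊(i,j,k)` and `d = z−μ` gives `S₋(i,j,k)`.) -/
def SmithBlocks (μ : ℂ) (n : ℕ) (f : Fin n → Polynomial ℂ) (a b : ℕ)
    (d : Polynomial ℂ) : Prop :=
  (∀ l : Fin n, (l : ℕ) < a → f l = 1) ∧
  (∀ l : Fin n, a ≤ (l : ℕ) → (l : ℕ) < b → f l = d) ∧
  (∀ l : Fin n, b ≤ (l : ℕ) → f l = nabla (piMu μ))

/-! Applying `∇` to `A₋₁(z)·A₁(z−1) = π_μ(z)` gives `B·A₁ = π_μ(z+1)` for `B = A₋₁(z+1)`.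
Writing `A₁ = U·diag(s)·V`, the matrix `V·B·U` satisfies `(V·B·U)·diag(s) = π_μ(z+1)`, which
forces it to be diagonal with entries `tᵢ = π_μ(z+1)/sᵢ`; transposing `B = V⁻¹·diag(t)·U⁻¹` and
reversing the order of the basis gives the Smith form of `Bᵀ`. The Smith types are exchanged
because `π_μ(z+1) = (z+μ+1)(z−μ)`, so dividing it by one linear factor leaves the other. -/

namespace Matrix

variable {ι R : Type*} [Fintype ι]

theorem transpose_map_mulVec_dotProduct {m : Type*} [Fintype m] [CommSemiring R] (σ : R ≃+* R)
    (A : Matrix m ι R) (w : m → R) (v : ι → R) :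
    (A.map σ)ᵀ *ᵥ (σ ∘ w) ⬝ᵥ v = σ (w ⬝ᵥ A *ᵥ (σ.symm ∘ v)) := by
  have hA : A.map σ *ᵥ v = σ ∘ (A *ᵥ (σ.symm ∘ v)) := by
    ext i
    simp [mulVec, dotProduct, map_sum]
  rw [← vecMul_transpose, transpose_transpose, ← dotProduct_mulVec, hA]
  exact (RingHom.map_dotProduct (σ : R →+* R) _ _).symm

variable [DecidableEq ι]

theorem map_mul_eq_smul_one_of_mul_map_symm [CommSemiring R] (σ : R ≃+* R)
    {A B : Matrix ι ι R} {c : R} (h : A * B.map σ.symm = c • 1) :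
    A.map σ * B = σ c • 1 := by
  have := congrArg (map · σ) h
  simpa [Matrix.map_mul, map_map, Function.comp_def, smul_one_eq_diagonal] using this

theorem exists_eq_diagonal_of_mul_diagonal_eq_smul_one [CommSemiring R] [NoZeroDivisors R]
    {M : Matrix ι ι R} {s : ι → R} {c : R} (hc : c ≠ 0) (h : M * diagonal s = c • 1) :
    ∃ t : ι → R, M = diagonal t ∧ ∀ i, s i * t i = c := by
  have hentry : ∀ i j, M i j * s j = if i = j then c else 0 := fun i j => by
    simpa [one_apply] using congrFun (congrFun h i) j
  have hs : ∀ j, s j ≠ 0 := fun j hj => hc (by simpa [hj] using (hentry j j).symm)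
  refine ⟨fun i => M i i, ?_, fun i => by simpa [mul_comm] using hentry i i⟩
  ext i j
  by_cases hij : i = j
  · simp [hij]
  · simpa [hij, hs j] using hentry i j

theorem exists_eq_mul_diagonal_mul_of_mul_eq_smul_one [CommRing R] [NoZeroDivisors R]
    {B U V : Matrix ι ι R} {s : ι → R} {c : R} (hc : c ≠ 0) (hU : IsUnit U) (hV : IsUnit V)
    (h : B * (U * diagonal s * V) = c • 1) :
    ∃ t : ι → R, (∀ i, s i * t i = c) ∧ B = V⁻¹ * diagonal t * U⁻¹ := by
  have hUdet := (isUnit_iff_isUnit_det U).1 hU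
  have hVdet := (isUnit_iff_isUnit_det V).1 hV
  have hM : V * B * U * diagonal s = c • 1 := by
    calc V * B * U * diagonal s = V * (B * (U * diagonal s * V)) * V⁻¹ := by
          simp only [Matrix.mul_assoc, mul_nonsing_inv_cancel_right _ _ hVdet]
      _ = c • 1 := by
          rw [h, Matrix.mul_smul, Matrix.mul_one, Matrix.smul_mul, mul_nonsing_inv _ hVdet]
  obtain ⟨t, ht, hst⟩ := exists_eq_diagonal_of_mul_diagonal_eq_smul_one hc hM
  refine ⟨t, hst, ?_⟩
  rw [← ht]
  simp only [Matrix.mul_assoc, nonsing_inv_mul_cancel_left _ _ hVdet, mul_nonsing_inv _ hUdet,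
    Matrix.mul_one]

theorem exists_isUnit_eq_mul_diagonal_comp_mul [CommRing R] {A U V : Matrix ι ι R}
    (hU : IsUnit U) (hV : IsUnit V) {d : ι → R} (h : A = U * diagonal d * V) (e : Equiv.Perm ι) :
    ∃ U' V' : Matrix ι ι R, IsUnit U' ∧ IsUnit V' ∧ A = U' * diagonal (d ∘ e) * V' := by
  have hperm : ∀ σ : Equiv.Perm ι, IsUnit (σ.permMatrix R) := fun σ =>
    (Group.isUnit σ⁻¹).map (permMatrixHom (n := ι) (R := R))
  have hd : diagonal d = e⁻¹.permMatrix R * diagonal (d ∘ e) * e.permMatrix R := by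
    rw [PEquiv.toMatrix_toPEquiv_mul, PEquiv.mul_toMatrix_toPEquiv, submatrix_submatrix,
      Function.comp_id, Function.id_comp, Equiv.Perm.inv_def, submatrix_diagonal_equiv,
      Function.comp_assoc, Equiv.self_comp_symm, Function.comp_id]
  refine ⟨U * e⁻¹.permMatrix R, e.permMatrix R * V, hU.mul (hperm _), (hperm _).mul hV, ?_⟩
  rw [h, hd]
  simp only [Matrix.mul_assoc]

end Matrix

theorem nabla_piMu (μ : ℂ) : nabla (piMu μ) = (X + C μ + 1) * (X - C μ) := by
  simp only [nabla, piMu, algEquivAevalXAddC_apply, map_mul, map_sub, map_add, aeval_X,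
    aeval_C, map_one, Polynomial.algebraMap_eq]
  ring

theorem nabla_piMu_ne_zero (μ : ℂ) : nabla (piMu μ) ≠ 0 := by
  rw [nabla_piMu, add_assoc, ← C_1, ← C_add]
  exact mul_ne_zero (X_add_C_ne_zero _) (X_sub_C_ne_zero μ)

theorem SmithBlocks.rev_of_mul_eq {μ : ℂ} {n : ℕ} {s t : Fin n → Polynomial ℂ} {a b : ℕ}
    {d d' : Polynomial ℂ} (hdd' : d * d' = nabla (piMu μ))
    (hst : ∀ i, s i * t i = nabla (piMu μ)) (hs : SmithBlocks μ n s a b d) :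
    SmithBlocks μ n (fun i => t (Fin.rev i)) (n - b) (n - a) d' := by
  obtain ⟨hs₁, hsd, hsπ⟩ := hs
  have hd : d ≠ 0 := left_ne_zero_of_mul (hdd' ▸ nabla_piMu_ne_zero μ)
  refine ⟨fun l hl => ?_, fun l hl₁ hl₂ => ?_, fun l hl => ?_⟩
  · have h := hst l.rev
    rw [hsπ l.rev (by rw [Fin.val_rev]; omega)] at h
    exact mul_left_cancel₀ (nabla_piMu_ne_zero μ) (h.trans (mul_one _).symm)
  · have h := hst l.rev
    rw [hsd l.rev (by rw [Fin.val_rev]; omega) (by rw [Fin.val_rev]; omega), ← hdd'] at h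
    exact mul_left_cancel₀ hd h
  · simpa [hs₁ l.rev (by rw [Fin.val_rev]; omega)] using hst l.rev

theorem stmt_19_general (μ : ℂ) (n : ℕ)
    (Am A1 U V : Matrix (Fin n) (Fin n) (Polynomial ℂ))
    (s : Fin n → Polynomial ℂ)
    (h1 : Am * A1.map ⇑nabla.symm = piMu μ • (1 : Matrix (Fin n) (Fin n) (Polynomial ℂ)))
    (hU : IsUnit U) (hV : IsUnit V)
    (hA1 : A1 = U * Matrix.diagonal s * V) :
    (∀ w v : Fin n → Polynomial ℂ,
      ∑ i, ((Am.map ⇑nabla).transpose.mulVec (fun j => nabla (w j))) i * v i =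
        nabla (∑ i, w i * (Am.mulVec (fun j => nabla.symm (v j))) i)) ∧
    (∃ t : Fin n → Polynomial ℂ,
      (∀ i, s i * t i = nabla (piMu μ)) ∧
      (∃ U' V' : Matrix (Fin n) (Fin n) (Polynomial ℂ), IsUnit U' ∧ IsUnit V' ∧
        (Am.map ⇑nabla).transpose =
          U' * Matrix.diagonal (fun i => t (Fin.rev i)) * V') ∧
      (∀ a b : ℕ, a ≤ b → b ≤ n → SmithBlocks μ n s a b (X + C μ + 1) →
        SmithBlocks μ n (fun i => t (Fin.rev i)) (n - b) (n - a) (X - C μ)) ∧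
      (∀ a b : ℕ, a ≤ b → b ≤ n → SmithBlocks μ n s a b (X - C μ) →
        SmithBlocks μ n (fun i => t (Fin.rev i)) (n - b) (n - a) (X + C μ + 1))) := by
  refine ⟨Matrix.transpose_map_mulVec_dotProduct nabla.toRingEquiv Am, ?_⟩
  have hB : Am.map nabla * (U * Matrix.diagonal s * V) = nabla (piMu μ) • 1 :=
    hA1 ▸ Matrix.map_mul_eq_smul_one_of_mul_map_symm nabla.toRingEquiv h1
  obtain ⟨t, hst, hBt⟩ :=
    Matrix.exists_eq_mul_diagonal_mul_of_mul_eq_smul_one (nabla_piMu_ne_zero μ) hU hV hB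
  have hBtranspose :
      (Am.map ⇑nabla).transpose = U⁻¹.transpose * Matrix.diagonal t * V⁻¹.transpose := by
    rw [hBt]
    simp only [Matrix.transpose_mul, Matrix.diagonal_transpose, Matrix.mul_assoc]
  refine ⟨t, hst, ?_, fun a b _ _ => SmithBlocks.rev_of_mul_eq (nabla_piMu μ).symm hst,
    fun a b _ _ => SmithBlocks.rev_of_mul_eq (by rw [nabla_piMu, mul_comm]) hst⟩
  exact Matrix.exists_isUnit_eq_mul_diagonal_comp_mul
    ((Matrix.isUnit_transpose _).2 (Matrix.isUnit_nonsing_inv_iff.2 hU))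
    ((Matrix.isUnit_transpose _).2 (Matrix.isUnit_nonsing_inv_iff.2 hV)) hBtranspose Fin.revPerm

/-- let `(A₋₁∘∇⁻¹, A₁∘∇)` be a Casimir representation of semi-level `μ` on
`ℂ[z]^n` and let `A₁ = U·diag(s₁,…,s_n)·V` be its Smith normal form. Then (a) in the dual
basis the dual representation satisfies `φ₁^∨ = A₋₁(z+1)ᵗ∘∇` (stated via the canonical
pairing); (b) with `tᵢ := π_μ(z+1)/sᵢ` (so `sᵢ·tᵢ = π_μ(z+1)`), there are invertible `U', V'`
with `A₋₁(z+1)ᵗ = U'·diag(t_n,…,t_1)·V'`; and (c) if the representation has Smith type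
`S₊(i,j,k)`, `S₀(l,m)` or `S₋(i,j,k)`, the dual has Smith type `S₋(k,j,i)`, `S₀(m,l)` or
`S₊(k,j,i)` respectively. -/
theorem stmt_19 (μ : ℂ) (n : ℕ)
    (Am A1 U V : Matrix (Fin n) (Fin n) (Polynomial ℂ))
    (s : Fin n → Polynomial ℂ)
    (h1 : Am * A1.map ⇑nabla.symm = piMu μ • (1 : Matrix (Fin n) (Fin n) (Polynomial ℂ)))
    (h2 : A1 * Am.map ⇑nabla = (nabla (piMu μ)) • (1 : Matrix (Fin n) (Fin n) (Polynomial ℂ)))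
    (hU : IsUnit U) (hV : IsUnit V)
    (hA1 : A1 = U * Matrix.diagonal s * V)
    (hmonic : ∀ i, (s i).Monic)
    (hchain : ∀ i j : Fin n, i ≤ j → s i ∣ s j) :
    (∀ w v : Fin n → Polynomial ℂ,
      ∑ i, ((Am.map ⇑nabla).transpose.mulVec (fun j => nabla (w j))) i * v i =
        nabla (∑ i, w i * (Am.mulVec (fun j => nabla.symm (v j))) i)) ∧
    (∃ t : Fin n → Polynomial ℂ,
      (∀ i, s i * t i = nabla (piMu μ)) ∧
      (∃ U' V' : Matrix (Fin n) (Fin n) (Polynomial ℂ), IsUnit U' ∧ IsUnit V' ∧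
        (Am.map ⇑nabla).transpose =
          U' * Matrix.diagonal (fun i => t (Fin.rev i)) * V') ∧
      (∀ a b : ℕ, a ≤ b → b ≤ n → SmithBlocks μ n s a b (X + C μ + 1) →
        SmithBlocks μ n (fun i => t (Fin.rev i)) (n - b) (n - a) (X - C μ)) ∧
      (∀ a b : ℕ, a ≤ b → b ≤ n → SmithBlocks μ n s a b (X - C μ) →
        SmithBlocks μ n (fun i => t (Fin.rev i)) (n - b) (n - a) (X + C μ + 1))) :=
  stmt_19_general μ n Am A1 U V s h1 hU hV hA1
end
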